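/- arXiv:2501.08318 — 5 statements merged into one kernel-verified Lean document; each statement's English description precedes it below -/
import Mathlib

section
/- Let L₁ and L₂ be finite lattices with Dim(L₁) = m and Dim(L₂) = n, and let L = L₁ ]ᵇₐ L₂ be their adjunct with respect to a pair a < b in L₁ with b not covering a. Then Dim(L) ≤ m + max{m, n}. -/
/-- A family of `t` relations is a *realizer* of the relation `le`:
each member is a linear order (on the whole ground set) and their
intersection is exactly `le`.  (In particular each member extends `le`.) -/
def IsRealizer {α : Type*} (le : α → α → Prop) {t : ℕ}
    (R : Fin t → α → α → Prop) : Prop :=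
  (∀ i, IsLinearOrder α (R i)) ∧ ∀ x y, le x y ↔ ∀ i, R i x y

/-- The Dushnik–Miller order dimension of the relation `le`: the least
positive number `t` of linear extensions whose intersection is `le`. -/
noncomputable def orderDim {α : Type*} (le : α → α → Prop) : ℕ :=
  sInf {t | 0 < t ∧ ∃ R : Fin t → α → α → Prop, IsRealizer le R}

/-- An element of a poset is doubly irreducible if it has at most one lower
cover and at most one upper cover. -/
def DoublyIrreducible {α : Type*} [PartialOrder α] (z : α) : Prop :=
  {w | w ⋖ z}.Subsingleton ∧ {w | z ⋖ w}.Subsingleton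

/-- An element is reducible if it is not doubly irreducible. -/
def Reducible {α : Type*} [PartialOrder α] (z : α) : Prop :=
  ¬ DoublyIrreducible z

/-- A lattice is an RC-lattice if any two of its reducible elements are
comparable. -/
def IsRCLattice (α : Type*) [Lattice α] : Prop :=
  ∀ x y : α, Reducible x → Reducible y → (x ≤ y ∨ y ≤ x)


/-- The ground set of the complete fundamental basic block `L_r`:
the chain `A₁ ≺ x₁ ≺ A₂ ≺ ⋯ ≺ x_{r-1} ≺ A_r` (of length `2r-1`,
`A_{i+1}` sitting at position `2i`, `x_{i+1}` at position `2i+1`),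
together with the doubly irreducible elements `c_{ij}` for `1 ≤ i < j ≤ r`. -/
def Lr (r : ℕ) : Type :=
  Fin (2 * r - 1) ⊕ {p : Fin r × Fin r // (p.1 : ℕ) < (p.2 : ℕ)}

namespace Lr

/-- The order of `L_r`: on the chain it is the usual order; `z ≤ c_{ij}` iff
`z ≤ A_i`; `c_{ij} ≤ z` iff `A_j ≤ z`; `c_{ij} ≤ c_{kl}` iff `(i,j) = (k,l)`
or `j ≤ k`. -/
def le {r : ℕ} (x y : Lr r) : Prop :=
  match x, y with
  | Sum.inl k, Sum.inl k' => (k : ℕ) ≤ (k' : ℕ)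
  | Sum.inl k, Sum.inr c => (k : ℕ) ≤ 2 * (c.1.1 : ℕ)
  | Sum.inr c, Sum.inl k => 2 * (c.1.2 : ℕ) ≤ (k : ℕ)
  | Sum.inr c, Sum.inr c' =>
      ((c.1.1 : ℕ) = (c'.1.1 : ℕ) ∧ (c.1.2 : ℕ) = (c'.1.2 : ℕ)) ∨
        (c.1.2 : ℕ) ≤ (c'.1.1 : ℕ)

instance (r : ℕ) : PartialOrder (Lr r) where
  le := le
  le_refl x := by rcases x with k | ⟨p, hp⟩ <;> simp [le]
  le_trans x y z hxy hyz := by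
    rcases x with k | ⟨p, hp⟩ <;> rcases y with k' | ⟨q, hq⟩ <;>
      rcases z with k'' | ⟨t, ht⟩ <;>
      simp only [le] at hxy hyz ⊢ <;> omega
  le_antisymm x y hxy hyx := by
    rcases x with k | ⟨p, hp⟩ <;> rcases y with k' | ⟨q, hq⟩ <;>
      simp only [le] at hxy hyx
    · exact congrArg Sum.inl (Fin.ext (by omega))
    · omega
    · omega
    · have h1 : (p.1 : ℕ) = (q.1 : ℕ) := by omega
      have h2 : (p.2 : ℕ) = (q.2 : ℕ) := by omega
      exact congrArg Sum.inr (Subtype.ext (Prod.ext (Fin.ext h1) (Fin.ext h2)))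

/-- The reducible element `A_{i+1}` of `L_r` (`i` is 0-based). -/
def A {r : ℕ} (i : Fin r) : Lr r :=
  Sum.inl ⟨2 * (i : ℕ), by have := i.2; omega⟩

/-- The doubly irreducible chain element `x_{i+1}` of `L_r` (`i` is 0-based). -/
def X {r : ℕ} (i : Fin (r - 1)) : Lr r :=
  Sum.inl ⟨2 * (i : ℕ) + 1, by have := i.2; omega⟩

/-- The doubly irreducible element `c_{(i+1)(j+1)}` of `L_r`
(`i`, `j` are 0-based). -/
def c {r : ℕ} (i j : Fin r) (h : (i : ℕ) < (j : ℕ)) : Lr r :=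
  Sum.inr ⟨(i, j), h⟩

end Lr


/-- The adjunct order `L₁ ]ᵇₐ L₂` on the disjoint union of two ordered sets
(with respect to the pair `a < b` of the first one):
`x ≤ y` iff both lie in `L₁` and `x ≤ y` there, or both lie in `L₂` and
`x ≤ y` there, or `x ∈ L₁`, `y ∈ L₂` and `x ≤ a`, or `x ∈ L₂`, `y ∈ L₁`
and `b ≤ y`. -/
def adjunctLE {α β : Type*} [LE α] [LE β] (a b : α) :
    α ⊕ β → α ⊕ β → Prop
  | Sum.inl x, Sum.inl y => x ≤ y
  | Sum.inl x, Sum.inr _ => x ≤ a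
  | Sum.inr _, Sum.inl y => b ≤ y
  | Sum.inr x, Sum.inr y => x ≤ y

/-- A subset of a lattice is a sublattice if it is closed under `⊔` and `⊓`. -/
def IsSublatticeSet {α : Type*} [Lattice α] (S : Set α) : Prop :=
  ∀ ⦃x⦄, x ∈ S → ∀ ⦃y⦄, y ∈ S → x ⊔ y ∈ S ∧ x ⊓ y ∈ S

/-- A finite lattice on `n` elements is dismantlable if there is a chain
`L₁ ⊆ L₂ ⊆ ⋯ ⊆ Lₙ` of sublattices with `|Lᵢ| = i` exhausting the lattice. -/
def Dismantlable (α : Type*) [Lattice α] : Prop :=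
  ∃ S : Fin (Nat.card α) → Set α,
    (∀ i, IsSublatticeSet (S i)) ∧
    (∀ i j, i ≤ j → S i ⊆ S j) ∧
    (∀ i, Nat.card (S i) = (i : ℕ) + 1) ∧
    (∀ x : α, ∃ i, x ∈ S i)

/-- The cover graph of a poset: `x` and `y` are adjacent iff one covers the
other. -/
def coverGraph (α : Type*) [PartialOrder α] : SimpleGraph α where
  Adj x y := x ⋖ y ∨ y ⋖ x
  symm := ⟨fun x y h => h.symm⟩
  loopless := ⟨fun x h => by rcases h with h | h <;> exact lt_irrefl x h.lt⟩

/-- The nullity of a poset: (number of covering pairs) − (number of elements)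
+ (number of connected components of the cover graph). -/
noncomputable def nullity (α : Type*) [PartialOrder α] : ℤ :=
  (Nat.card {p : α × α // p.1 ⋖ p.2} : ℤ) - (Nat.card α : ℤ) +
    (Nat.card (coverGraph α).ConnectedComponent : ℤ)

/-- `(a, b)` is an adjunct pair of the lattice `α`: `a < b` and `α` can be
partitioned into nonempty sublattices `K` and `M` with `a, b ∈ K`, `b` not
covering `a` within `K`, such that for `x ∈ K`, `y ∈ M`: `x ≤ y ↔ x ≤ a`
and `y ≤ x ↔ b ≤ x`. -/
def IsAdjunctPair {α : Type*} [Lattice α] (a b : α) : Prop :=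
  a < b ∧ ∃ K M : Set α, K.Nonempty ∧ M.Nonempty ∧ Disjoint K M ∧
    K ∪ M = Set.univ ∧ IsSublatticeSet K ∧ IsSublatticeSet M ∧
    a ∈ K ∧ b ∈ K ∧ (∃ z ∈ K, a < z ∧ z < b) ∧
    ∀ x ∈ K, ∀ y ∈ M, (x ≤ y ↔ x ≤ a) ∧ (y ≤ x ↔ b ≤ x)

/-- `s` is the least upper bound of `x` and `y` with respect to the
relation `le`. -/
def IsLUBRel {γ : Type*} (le : γ → γ → Prop) (x y s : γ) : Prop :=
  le x s ∧ le y s ∧ ∀ z, le x z → le y z → le s z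

/-- `s` is the greatest lower bound of `x` and `y` with respect to the
relation `le`. -/
def IsGLBRel {γ : Type*} (le : γ → γ → Prop) (x y s : γ) : Prop :=
  le s x ∧ le s y ∧ ∀ z, le z x → le z y → le z s

/-- `y` covers `x` with respect to the relation `le`. -/
def RelCovBy {γ : Type*} (le : γ → γ → Prop) (x y : γ) : Prop :=
  le x y ∧ x ≠ y ∧ ∀ z, le x z → le z y → z = x ∨ z = y

/-!
Let `R₁, …, R_m` realize `L₁` and `S₁, …, S_n` realize `L₂`; repeating members, both families
can be taken of length `k = max m n`. Inserting `L₂` as a block just above `a` in each `Rᵢ`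
(ordered by any linear extension of `L₂`) gives `m` linear extensions of the adjunct that realize
`L₁` and all relations `x ≤ a`; inserting `L₂`, ordered by `Sⱼ`, just below `b` in each `Rⱼ`
gives `k` more that realize all relations `b ≤ y` and the order of `L₂`. Because `a < b`, no
linear extension of `L₁` has an element above `b` and below `a`, so all `m + k` orders extend
the adjunct order.
-/

section Realizer

variable {α ι κ : Type*} {le : α → α → Prop}

def IsIndexedRealizer (le : α → α → Prop) (R : ι → α → α → Prop) : Prop :=
  (∀ i, IsLinearOrder α (R i)) ∧ ∀ x y, le x y ↔ ∀ i, R i x y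

theorem IsIndexedRealizer.le_rel {R : ι → α → α → Prop} (hR : IsIndexedRealizer le R) (i : ι) :
    le ≤ R i :=
  fun x y h => (hR.2 x y).1 h i

theorem IsIndexedRealizer.comp_surjective {R : ι → α → α → Prop} (hR : IsIndexedRealizer le R)
    {f : κ → ι} (hf : f.Surjective) : IsIndexedRealizer le (R ∘ f) :=
  ⟨fun k => hR.1 (f k), fun x y => (hR.2 x y).trans hf.forall⟩

theorem IsIndexedRealizer.exists_fin [Finite ι] [Nonempty ι] {R : ι → α → α → Prop}
    (hR : IsIndexedRealizer le R) :
    0 < Nat.card ι ∧ ∃ R' : Fin (Nat.card ι) → α → α → Prop, IsRealizer le R' :=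
  ⟨Nat.card_pos, _, hR.comp_surjective (Finite.equivFin ι).symm.surjective⟩

theorem orderDim_le_natCard [Finite ι] [Nonempty ι] {R : ι → α → α → Prop}
    (hR : IsIndexedRealizer le R) : orderDim le ≤ Nat.card ι :=
  Nat.sInf_le hR.exists_fin

theorem IsIndexedRealizer.exists_orderDim [Finite ι] [Nonempty ι] {R : ι → α → α → Prop}
    (hR : IsIndexedRealizer le R) :
    0 < orderDim le ∧ ∃ R' : Fin (orderDim le) → α → α → Prop, IsIndexedRealizer le R' :=
  Nat.sInf_mem (s := {t | 0 < t ∧ ∃ R' : Fin t → α → α → Prop, IsRealizer le R'})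
    ⟨_, hR.exists_fin⟩

theorem IsIndexedRealizer.exists_fin_of_le {m k : ℕ} {R : Fin m → α → α → Prop}
    (hR : IsIndexedRealizer le R) (hm : 0 < m) (hmk : m ≤ k) :
    ∃ R' : Fin k → α → α → Prop, IsIndexedRealizer le R' :=
  ⟨_, hR.comp_surjective (f := fun j : Fin k => ⟨j % m, Nat.mod_lt _ hm⟩)
    fun i => ⟨Fin.castLE hmk i, Fin.ext (Nat.mod_eq_of_lt i.2)⟩⟩

end Realizer

section LinearExtension

variable (γ : Type*) [PartialOrder γ]

def linearExtensions : Set (γ → γ → Prop) :=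
  {s | IsLinearOrder γ s ∧ (· ≤ ·) ≤ s}

variable {γ}

theorem exists_mem_linearExtensions_swap {x y : γ} (hxy : ¬ x ≤ y) :
    ∃ s ∈ linearExtensions γ, s y x := by
  -- the order generated by `≤` and the extra relation `y ≤ x`
  let r : γ → γ → Prop := fun u v => u ≤ v ∨ (u ≤ y ∧ x ≤ v)
  have : IsPartialOrder γ r :=
    { refl := fun u => Or.inl le_rfl
      trans := by
        rintro u v w (huv | ⟨huy, hxv⟩) (hvw | ⟨hvy, hxw⟩)
        · exact Or.inl (huv.trans hvw)
        · exact Or.inr ⟨huv.trans hvy, hxw⟩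
        · exact Or.inr ⟨huy, hxv.trans hvw⟩
        · exact absurd (hxv.trans hvy) hxy
      antisymm := by
        rintro u v (huv | ⟨huy, hxv⟩) (hvu | ⟨hvy, hxu⟩)
        · exact le_antisymm huv hvu
        · exact absurd (hxu.trans (huv.trans hvy)) hxy
        · exact absurd (hxv.trans (hvu.trans huy)) hxy
        · exact absurd (hxv.trans hvy) hxy }
  obtain ⟨s, hs, hrs⟩ := extend_partialOrder r
  exact ⟨s, ⟨hs, fun u v h => hrs u v (Or.inl h)⟩, hrs y x (Or.inr ⟨le_rfl, le_rfl⟩)⟩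

theorem isIndexedRealizer_linearExtensions :
    IsIndexedRealizer (α := γ) (· ≤ ·) fun s : linearExtensions γ => s.1 := by
  refine ⟨fun s => s.2.1, fun x y => ⟨fun h s => s.2.2 x y h, fun h => ?_⟩⟩
  by_contra hxy
  obtain ⟨s, hs, hyx⟩ := exists_mem_linearExtensions_swap hxy
  have := hs.1
  exact hxy (antisymm_of s (h ⟨s, hs⟩) hyx).le

theorem exists_isIndexedRealizer_orderDim [Finite γ] :
    0 < orderDim (α := γ) (· ≤ ·) ∧
      ∃ R : Fin (orderDim (α := γ) (· ≤ ·)) → γ → γ → Prop, IsIndexedRealizer (· ≤ ·) R := by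
  have : Nonempty (linearExtensions γ) :=
    let ⟨s, hs⟩ := extend_partialOrder (α := γ) (· ≤ ·)
    ⟨⟨s, hs⟩⟩
  exact isIndexedRealizer_linearExtensions.exists_orderDim

end LinearExtension

section Adjunct

/-- The linear order `P` with a copy of `Q` inserted just above the initial segment `C` of `P`. -/
def insertAtCut {α β : Type*} (P : α → α → Prop) (Q : β → β → Prop) (C : α → Prop) :
    α ⊕ β → α ⊕ β → Prop
  | Sum.inl x, Sum.inl y => P x y
  | Sum.inl x, Sum.inr _ => C x
  | Sum.inr _, Sum.inl y => ¬ C y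
  | Sum.inr x, Sum.inr y => Q x y

theorem insertAtCut_isLinearOrder {α β : Type*} {P : α → α → Prop} {Q : β → β → Prop}
    {C : α → Prop} [IsLinearOrder α P] [IsLinearOrder β Q] (hC : ∀ x y, P x y → C y → C x) :
    IsLinearOrder (α ⊕ β) (insertAtCut P Q C) where
  refl := by rintro (x | x) <;> exact refl_of _ x
  trans := by
    rintro (x | x) (y | y) (z | z) hxy hyz <;> simp only [insertAtCut] at hxy hyz ⊢
    · exact trans_of P hxy hyz
    · exact hC x y hxy hyz
    · exact (total_of P x z).resolve_right fun hzx => hyz (hC z x hzx hxy)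
    · exact hxy
    · exact fun hz => hxy (hC y z hyz hz)
    · exact absurd hyz hxy
    · exact hyz
    · exact trans_of Q hxy hyz
  antisymm := by
    rintro (x | x) (y | y) hxy hyx <;> simp only [insertAtCut] at hxy hyx
    · exact congrArg Sum.inl (antisymm_of P hxy hyx)
    · exact absurd hxy hyx
    · exact absurd hyx hxy
    · exact congrArg Sum.inr (antisymm_of Q hxy hyx)
  total := by
    rintro (x | x) (y | y)
    · exact total_of P x y
    · exact em (C x)
    · exact (em (C y)).symm
    · exact total_of Q x y

variable {α β : Type*} [Preorder α] [LE β] {a b : α}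

theorem not_rel_between_of_lt {P : α → α → Prop} [IsLinearOrder α P] (hP : (· ≤ ·) ≤ P)
    (hab : a < b) (x : α) : ¬ (P b x ∧ P x a) := fun ⟨hbx, hxa⟩ =>
  hab.ne (antisymm_of P (hP a b hab.le) (trans_of P hbx hxa))

theorem insertAtCut_of_adjunctLE {P : α → α → Prop} {Q : β → β → Prop} [IsLinearOrder α P]
    (hP : (· ≤ ·) ≤ P) (hQ : (· ≤ ·) ≤ Q) (hab : a < b) {x y : α ⊕ β}
    (h : adjunctLE a b x y) :
    insertAtCut P Q (P · a) x y ∧ insertAtCut P Q (¬ P b ·) x y := by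
  rcases x with x | x <;> rcases y with y | y <;> simp only [adjunctLE] at h <;>
    simp only [insertAtCut, not_not]
  · exact ⟨hP x y h, hP x y h⟩
  · exact ⟨hP x a h, fun hbx => not_rel_between_of_lt hP hab x ⟨hbx, hP x a h⟩⟩
  · exact ⟨fun hya => not_rel_between_of_lt hP hab y ⟨hP b y h, hya⟩, hP b y h⟩
  · exact ⟨hQ x y h, hQ x y h⟩

theorem isIndexedRealizer_adjunctLE {ι κ : Type*} (hab : a < b) {R : ι → α → α → Prop}
    (hR : IsIndexedRealizer (· ≤ ·) R) {R' : κ → α → α → Prop}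
    (hR' : IsIndexedRealizer (· ≤ ·) R') {q : β → β → Prop} [IsLinearOrder β q]
    (hq : (· ≤ ·) ≤ q) {S : κ → β → β → Prop} (hS : IsIndexedRealizer (· ≤ ·) S) :
    IsIndexedRealizer (adjunctLE a b)
      (Sum.elim (fun i => insertAtCut (R i) q (R i · a))
        fun j => insertAtCut (R' j) (S j) (¬ R' j b ·)) := by
  refine ⟨Sum.forall.2 ⟨fun i => ?_, fun j => ?_⟩, fun x y => ⟨fun h => ?_, fun h => ?_⟩⟩
  · have := hR.1 i
    exact insertAtCut_isLinearOrder fun x y hxy hya => trans_of (R i) hxy hya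
  · have := hR'.1 j
    have := hS.1 j
    exact insertAtCut_isLinearOrder fun x y hxy hby hbx => hby (trans_of (R' j) hbx hxy)
  · refine Sum.forall.2 ⟨fun i => ?_, fun j => ?_⟩
    · have := hR.1 i
      exact (insertAtCut_of_adjunctLE (hR.le_rel i) hq hab h).1
    · have := hR'.1 j
      exact (insertAtCut_of_adjunctLE (hR'.le_rel j) (hS.le_rel j) hab h).2
  · rcases x with x | x <;> rcases y with y | y
    · exact (hR.2 x y).2 fun i => h (.inl i)
    · exact (hR.2 x a).2 fun i => h (.inl i)
    · exact (hR'.2 b y).2 fun j => not_not.1 (h (.inr j))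
    · exact (hS.2 x y).2 fun j => h (.inr j)

end Adjunct

theorem dim_adjunct_le_add_max_general {α β : Type*} [Lattice α] [Lattice β]
    [Finite α] [Finite β] {a b : α} (hab : a < b)
    {m n : ℕ} (hm : orderDim ((· ≤ ·) : α → α → Prop) = m)
    (hn : orderDim ((· ≤ ·) : β → β → Prop) = n) :
    orderDim (adjunctLE (α := α) (β := β) a b) ≤ m + max m n := by
  subst hm hn
  obtain ⟨hm, R, hR⟩ := exists_isIndexedRealizer_orderDim (γ := α)
  obtain ⟨hn, S, hS⟩ := exists_isIndexedRealizer_orderDim (γ := β)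
  obtain ⟨R', hR'⟩ := hR.exists_fin_of_le hm (le_max_left _ _)
  obtain ⟨S', hS'⟩ := hS.exists_fin_of_le hn (le_max_right _ _)
  have : NeZero (orderDim ((· ≤ ·) : α → α → Prop)) := ⟨hm.ne'⟩
  have := hS.1 ⟨0, hn⟩
  calc _ ≤ Nat.card (Fin _ ⊕ Fin _) :=
        orderDim_le_natCard (isIndexedRealizer_adjunctLE hab hR hR' (hS.le_rel ⟨0, hn⟩) hS')
    _ = _ := by simp

/-- `Dim(L₁ ]ᵇₐ L₂) ≤ m + max {m, n}` where `m = Dim L₁`,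
`n = Dim L₂`. -/
theorem dim_adjunct_le_add_max {α β : Type*} [Lattice α] [Lattice β]
    [Finite α] [Finite β] {a b : α} (hab : a < b) (hcov : ¬ a ⋖ b)
    {m n : ℕ} (hm : orderDim ((· ≤ ·) : α → α → Prop) = m)
    (hn : orderDim ((· ≤ ·) : β → β → Prop) = n) :
    orderDim (adjunctLE (α := α) (β := β) a b) ≤ m + max m n :=
  dim_adjunct_le_add_max_general hab hm hn
end

section
/- Let L₁ and L₂ be finite lattices with Dim(L₁) = m and Dim(L₂) = n, let L = L₁ ]ᵇₐ L₂ be their adjunct with respect to a pair a < b in L₁ with b not covering a, and suppose m ≥ n. Then m ≤ Dim(L) ≤ m + 1. -/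
/-!
Every realizer of the adjunct restricts to a realizer of `L₁`, which gives `m ≤ Dim L`.
For the upper bound take realizers `R₁, …, R_m` of `L₁` and `S₁, …, S_n` of `L₂` and a
surjection `σ` of the indices. Splicing `S_{σ i}` into `Rᵢ` directly above `a` gives `m`
linear extensions of `L` whose intersection is `L` except that it may still put `y ∈ L₂` below
some `x ∈ L₁` with `b ≰ x`. One more linear extension, in which `L₂` sits directly below the
principal filter of `b`, removes exactly these pairs.
-/

section Realizer

variable {α : Type*}

/-- `IsRealizer`, for families indexed by an arbitrary type. -/
def IsRealizerFamily {ι : Type*} (le : α → α → Prop) (R : ι → α → α → Prop) : Prop :=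
  (∀ i, IsLinearOrder α (R i)) ∧ ∀ x y, le x y ↔ ∀ i, R i x y

def realizerSizes (le : α → α → Prop) : Set ℕ :=
  {t | 0 < t ∧ ∃ R : Fin t → α → α → Prop, IsRealizer le R}

variable {ι : Type*} {le : α → α → Prop} {R : ι → α → α → Prop}

theorem IsRealizerFamily.rel_of_le (h : IsRealizerFamily le R) {x y : α} (hxy : le x y) (i : ι) :
    R i x y :=
  (h.2 x y).1 hxy i

theorem IsRealizerFamily.natCard_mem_realizerSizes [Finite ι] [Nonempty ι]
    (h : IsRealizerFamily le R) : Nat.card ι ∈ realizerSizes le := by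
  let e := Finite.equivFin ι
  exact ⟨Nat.card_pos, fun j => R (e.symm j), fun j => h.1 _,
    fun x y => (h.2 x y).trans e.forall_congr_left⟩

theorem realizerSizes_subset_of_injective {γ : Type*} {le' : γ → γ → Prop} {f : α → γ}
    (hf : f.Injective) (hle : ∀ x y, le x y ↔ le' (f x) (f y)) :
    realizerSizes le' ⊆ realizerSizes le := by
  rintro t ⟨ht, R', hlin, hR'⟩
  exact ⟨ht, fun i => Function.onFun (R' i) f,
    fun i => have := hlin i; hf.isLinearOrder_onFun (R' i),
    fun x y => (hle x y).trans (hR' _ _)⟩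

theorem orderDim_le_orderDim_of_injective {γ : Type*} {le' : γ → γ → Prop} {f : α → γ}
    (hf : f.Injective) (hle : ∀ x y, le x y ↔ le' (f x) (f y))
    (hne : (realizerSizes le').Nonempty) : orderDim le ≤ orderDim le' :=
  Nat.sInf_le (realizerSizes_subset_of_injective hf hle (Nat.sInf_mem hne))

end Realizer

section LinearExtension

variable {α : Type*} [PartialOrder α]

theorem exists_linearExtension_lowerSet_before_upperSet {D U : Set α} (hD : IsLowerSet D)
    (hU : IsUpperSet U) (hDU : Disjoint D U) :
    ∃ s : α → α → Prop, IsLinearOrder α s ∧ (∀ x y, x ≤ y → s x y) ∧ ∀ x ∈ D, ∀ y ∈ U, s x y := by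
  let r : α → α → Prop := fun x y => x ≤ y ∨ (x ∈ D ∧ y ∈ U)
  have hr : IsPartialOrder α r :=
    { refl := fun x => Or.inl le_rfl
      trans := by
        rintro x y z (hxy | ⟨hx, hy⟩) (hyz | ⟨hy', hz⟩)
        · exact Or.inl (hxy.trans hyz)
        · exact Or.inr ⟨hD hxy hy', hz⟩
        · exact Or.inr ⟨hx, hU hyz hy⟩
        · exact absurd hy (Set.disjoint_left.1 hDU hy')
      antisymm := by
        rintro x y (hxy | ⟨hx, hy⟩) (hyx | ⟨hy', hx'⟩)
        · exact le_antisymm hxy hyx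
        · exact absurd (hU hxy hx') (Set.disjoint_left.1 hDU hy')
        · exact absurd (hU hyx hy) (Set.disjoint_left.1 hDU hx)
        · exact absurd hy (Set.disjoint_left.1 hDU hy') }
  obtain ⟨s, hs, hrs⟩ := extend_partialOrder r
  exact ⟨s, hs, fun x y h => hrs x y (Or.inl h), fun x hx y hy => hrs x y (Or.inr ⟨hx, hy⟩)⟩

variable (α) in
theorem realizerSizes_nonempty [Finite α] :
    (realizerSizes ((· ≤ ·) : α → α → Prop)).Nonempty := by
  obtain ⟨s₀, hs₀, hs₀le⟩ := extend_partialOrder ((· ≤ ·) : α → α → Prop)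
  have hsep (p : {p : α × α // ¬ p.1 ≤ p.2}) :
      ∃ s : α → α → Prop, IsLinearOrder α s ∧ (∀ x y, x ≤ y → s x y) ∧ s p.1.2 p.1.1 := by
    obtain ⟨⟨x, y⟩, hxy⟩ := p
    obtain ⟨s, hs, hsle, hyx⟩ := exists_linearExtension_lowerSet_before_upperSet
      (isLowerSet_Iic y) (isUpperSet_Ici x)
      (Set.disjoint_left.2 fun z hzy hxz => hxy (le_trans hxz hzy))
    exact ⟨s, hs, hsle, hyx y le_rfl x le_rfl⟩
  choose s hs hsle hsyx using hsep
  have hR : IsRealizerFamily (· ≤ ·) fun o : Option {p : α × α // ¬ p.1 ≤ p.2} => o.elim s₀ s := by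
    refine ⟨?_, fun x y => ⟨fun hxy o => ?_, fun h => ?_⟩⟩
    · rintro (_ | p)
      exacts [hs₀, hs p]
    · cases o
      exacts [hs₀le x y hxy, hsle _ x y hxy]
    · by_contra hxy
      exact hxy ((hs ⟨(x, y), hxy⟩).antisymm x y (h (some _)) (hsyx _)).le
  exact ⟨_, hR.natCard_mem_realizerSizes⟩

end LinearExtension

section Splice

variable {α β : Type*}

def splice (r : α → α → Prop) (P : α → Prop) (s : β → β → Prop) : α ⊕ β → α ⊕ β → Prop
  | .inl x, .inl y => r x y
  | .inl x, .inr _ => P x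
  | .inr _, .inl y => ¬ P y
  | .inr x, .inr y => s x y

variable {r : α → α → Prop} {P : α → Prop} {s : β → β → Prop}

theorem isLinearOrder_splice (hr : IsLinearOrder α r) (hs : IsLinearOrder β s)
    (hP : ∀ x y, r x y → P y → P x) : IsLinearOrder (α ⊕ β) (splice r P s) :=
  { refl := by
      rintro (x | x)
      exacts [hr.refl x, hs.refl x]
    trans := by
      rintro (x | x) (y | y) (z | z) h₁ h₂
      · exact hr.trans x y z h₁ h₂
      · exact hP x y h₁ h₂
      · exact (hr.total x z).resolve_right fun hzx => h₂ (hP z x hzx h₁)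
      · exact h₁
      · exact fun hz => h₁ (hP y z h₂ hz)
      · exact absurd h₂ h₁
      · exact h₂
      · exact hs.trans x y z h₁ h₂
    antisymm := by
      rintro (x | x) (y | y) h₁ h₂
      · exact congrArg Sum.inl (hr.antisymm x y h₁ h₂)
      · exact absurd h₁ h₂
      · exact absurd h₂ h₁
      · exact congrArg Sum.inr (hs.antisymm x y h₁ h₂)
    total := by
      rintro (x | x) (y | y)
      · exact hr.total x y
      · exact em (P x)
      · exact (em (P y)).symm
      · exact hs.total x y }

theorem adjunctLE_le_splice [LE α] [LE β] {a b : α} (hr : ∀ x y : α, x ≤ y → r x y)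
    (hs : ∀ x y : β, x ≤ y → s x y) (hPa : ∀ x, x ≤ a → P x) (hPb : ∀ x, b ≤ x → ¬ P x) :
    ∀ u v, adjunctLE a b u v → splice r P s u v := by
  rintro (x | x) (y | y) h
  exacts [hr x y h, hPa x h, hPb y h, hs x y h]

end Splice

theorem IsRealizerFamily.exists_isRealizerFamily_adjunctLE {α β ι κ : Type*} [PartialOrder α]
    [LE β] [Nonempty κ] {a b : α} (hab : a < b) {R : ι → α → α → Prop} {S : κ → β → β → Prop}
    (hR : IsRealizerFamily (· ≤ ·) R) (hS : IsRealizerFamily (· ≤ ·) S) {σ : ι → κ}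
    (hσ : σ.Surjective) :
    ∃ T : Option ι → α ⊕ β → α ⊕ β → Prop, IsRealizerFamily (adjunctLE a b) T := by
  obtain ⟨q, hq, hqle, hqb⟩ := exists_linearExtension_lowerSet_before_upperSet
    (isUpperSet_Ici b).compl (isUpperSet_Ici b) disjoint_compl_left
  have hqb' : ∀ x, q b x → b ≤ x := fun x hbx => by
    by_contra hx
    exact hx (hq.antisymm b x hbx (hqb x hx b le_rfl)).le
  have hRb (i : ι) (x : α) (hbx : b ≤ x) : ¬ R i x a := fun hxa =>
    hab.ne ((hR.1 i).antisymm a b (hR.rel_of_le hab.le i)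
      ((hR.1 i).trans b x a (hR.rel_of_le hbx i) hxa))
  refine ⟨fun o => o.elim (splice q (fun x => ¬ b ≤ x) (S (Classical.arbitrary κ)))
    fun i => splice (R i) (fun x => R i x a) (S (σ i)), ?_, fun u v => ⟨fun h o => ?_, fun h => ?_⟩⟩
  · rintro (_ | i)
    · exact isLinearOrder_splice hq (hS.1 _) fun x y hxy hy hbx =>
        hy (hqb' y (hq.trans b x y (hqle b x hbx) hxy))
    · exact isLinearOrder_splice (hR.1 i) (hS.1 _) fun x y hxy hya => (hR.1 i).trans x y a hxy hya
  · rcases o with _ | i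
    · exact adjunctLE_le_splice hqle (fun _ _ h => hS.rel_of_le h _)
        (fun x hxa (hbx : b ≤ x) => hab.not_ge (hbx.trans hxa)) (fun x hbx h => h hbx) u v h
    · exact adjunctLE_le_splice (fun _ _ h => hR.rel_of_le h i) (fun _ _ h => hS.rel_of_le h _)
        (fun x hxa => hR.rel_of_le hxa i) (hRb i) u v h
  · rcases u with x | y <;> rcases v with x' | y'
    · exact (hR.2 x x').2 fun i => h (some i)
    · exact (hR.2 x a).2 fun i => h (some i)
    · exact not_not.1 (h none)
    · exact (hS.2 y y').2 fun j => by obtain ⟨i, rfl⟩ := hσ j; exact h (some i)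

theorem dim_adjunct_of_ge_general {α β : Type*} [Lattice α] [Lattice β]
    [Finite α] [Finite β] {a b : α} (hab : a < b)
    {m n : ℕ} (hm : orderDim ((· ≤ ·) : α → α → Prop) = m)
    (hn : orderDim ((· ≤ ·) : β → β → Prop) = n) (hmn : n ≤ m) :
    m ≤ orderDim (adjunctLE (α := α) (β := β) a b) ∧
      orderDim (adjunctLE (α := α) (β := β) a b) ≤ m + 1 := by
  obtain ⟨-, R, hR⟩ : m ∈ realizerSizes ((· ≤ ·) : α → α → Prop) :=
    hm ▸ Nat.sInf_mem (realizerSizes_nonempty α)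
  obtain ⟨hn₀, S, hS⟩ : n ∈ realizerSizes ((· ≤ ·) : β → β → Prop) :=
    hn ▸ Nat.sInf_mem (realizerSizes_nonempty β)
  have : Nonempty (Fin n) := ⟨⟨0, hn₀⟩⟩
  obtain ⟨T, hT⟩ := IsRealizerFamily.exists_isRealizerFamily_adjunctLE hab hR hS
    (Function.invFun_surjective (Fin.castLE_injective hmn))
  have hL : m + 1 ∈ realizerSizes (adjunctLE (α := α) (β := β) a b) := by
    simpa using hT.natCard_mem_realizerSizes
  refine ⟨?_, Nat.sInf_le hL⟩
  rw [← hm]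
  exact orderDim_le_orderDim_of_injective Sum.inl_injective (fun _ _ => Iff.rfl) ⟨_, hL⟩

/-- if `m = Dim L₁ ≥ n = Dim L₂` then
`m ≤ Dim(L₁ ]ᵇₐ L₂) ≤ m + 1`. -/
theorem dim_adjunct_of_ge {α β : Type*} [Lattice α] [Lattice β]
    [Finite α] [Finite β] {a b : α} (hab : a < b) (hcov : ¬ a ⋖ b)
    {m n : ℕ} (hm : orderDim ((· ≤ ·) : α → α → Prop) = m)
    (hn : orderDim ((· ≤ ·) : β → β → Prop) = n) (hmn : n ≤ m) :
    m ≤ orderDim (adjunctLE (α := α) (β := β) a b) ∧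
      orderDim (adjunctLE (α := α) (β := β) a b) ≤ m + 1 :=
  dim_adjunct_of_ge_general hab hm hn hmn
end

section
/- Let L₁ and L₂ be finite lattices with Dim(L₁) = m and Dim(L₂) = n, let L = L₁ ]ᵇₐ L₂ be their adjunct with respect to a pair a < b in L₁ with b not covering a, and suppose m < n. Then Dim(L) = n. -/
/-!
Restricting a realizer of `L₁ ]ᵇₐ L₂` to `L₂` gives a realizer of `L₂`, so the dimension is at
least `n`. Conversely, add to a realizer `R₁, …, R_m` of `L₁` one linear extension `Q` in which
`↓a` is an initial segment; as `m < n`, these `m + 1` extensions can be spread over `n` slots and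
paired with a realizer `S₁, …, Sₙ` of `L₂`. Insert the chain `Sᵢ` into the `i`-th chain of `L₁`
right below `b` (for an `Rⱼ`) or right above `↓a` (for `Q`). Then the elements of `L₁` below every
inserted block are exactly those `≤ a`, and those above every block exactly those `≥ b`.
-/

open Function

section LinearExtension

variable {α : Type*} [PartialOrder α]

theorem exists_linearExtension_isLowerSet {s : Set α} (hs : IsLowerSet s) :
    ∃ r : α → α → Prop, IsLinearOrder α r ∧ (∀ x y, x ≤ y → r x y) ∧
      ∀ x y, r x y → y ∈ s → x ∈ s := by
  let r₀ : α → α → Prop := fun x y => x ≤ y ∨ (x ∈ s ∧ y ∉ s)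
  have : IsPartialOrder α r₀ :=
    { refl := fun x => Or.inl le_rfl
      trans := by
        rintro x y z (hxy | ⟨hx, hy⟩) (hyz | ⟨hy', hz⟩)
        · exact Or.inl (hxy.trans hyz)
        · exact Or.inr ⟨hs hxy hy', hz⟩
        · exact Or.inr ⟨hx, fun hz => hy (hs hyz hz)⟩
        · exact absurd hy' hy
      antisymm := by
        rintro x y (hxy | ⟨hx, hy⟩) (hyx | ⟨hy', hx'⟩)
        · exact le_antisymm hxy hyx
        · exact absurd (hs hxy hy') hx'
        · exact absurd (hs hyx hx) hy
        · exact absurd hy' hy }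
  obtain ⟨r, hr, hr₀⟩ := extend_partialOrder r₀
  refine ⟨r, hr, fun x y h => hr₀ x y (Or.inl h), fun x y hxy hy => ?_⟩
  by_contra hx
  obtain rfl : x = y := antisymm hxy (hr₀ y x (Or.inr ⟨hy, hx⟩))
  exact hx hy

theorem exists_linearExtension_not_rel {x y : α} (h : ¬ x ≤ y) :
    ∃ r : α → α → Prop, IsLinearOrder α r ∧ (∀ u v, u ≤ v → r u v) ∧ ¬ r x y := by
  obtain ⟨r, hr, hle, hlower⟩ := exists_linearExtension_isLowerSet (isLowerSet_Iic y)
  exact ⟨r, hr, hle, fun hxy => h (hlower x y hxy le_rfl)⟩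

end LinearExtension

section Realizer

variable {α β : Type*} {t : ℕ}

theorem IsRealizer.not_rel_of_lt [PartialOrder α] {R : Fin t → α → α → Prop}
    (hR : IsRealizer (· ≤ ·) R) {x y : α} (h : x < y) (i : Fin t) : ¬ R i y x := fun hyx =>
  haveI := hR.1 i
  h.ne (antisymm ((hR.2 x y).1 h.le i) hyx)

theorem IsRealizer.snoc {le : α → α → Prop} {R : Fin t → α → α → Prop} (hR : IsRealizer le R)
    {Q : α → α → Prop} (hQ : IsLinearOrder α Q) (hleQ : ∀ x y, le x y → Q x y) :
    IsRealizer le (Fin.snoc R Q : Fin (t + 1) → α → α → Prop) := by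
  refine ⟨Fin.lastCases (by simpa using hQ) fun i => by simpa using hR.1 i, fun x y => ?_⟩
  simp only [Fin.forall_fin_succ', Fin.snoc_castSucc, Fin.snoc_last, ← hR.2]
  exact ⟨fun h => ⟨h, hleQ x y h⟩, And.left⟩

theorem IsRealizer.comp_surjective {le : α → α → Prop} {R : Fin t → α → α → Prop}
    (hR : IsRealizer le R) {k : ℕ} {f : Fin k → Fin t} (hf : Surjective f) :
    IsRealizer le (R ∘ f) :=
  ⟨fun i => hR.1 (f i), fun x y => (hR.2 x y).trans hf.forall⟩

theorem IsRealizer.comap {le : β → β → Prop} {R : Fin t → β → β → Prop} (hR : IsRealizer le R)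
    {f : α → β} (hf : Injective f) : IsRealizer (le on f) fun i => R i on f :=
  ⟨fun i => haveI := hR.1 i; hf.isLinearOrder_onFun _, fun x y => hR.2 (f x) (f y)⟩

theorem orderDim_le {le : α → α → Prop} {R : Fin t → α → α → Prop} (ht : 0 < t)
    (hR : IsRealizer le R) : orderDim le ≤ t :=
  Nat.sInf_le ⟨ht, R, hR⟩

theorem orderDim_spec {le : α → α → Prop}
    (h : ∃ t, 0 < t ∧ ∃ R : Fin t → α → α → Prop, IsRealizer le R) :
    0 < orderDim le ∧ ∃ R : Fin (orderDim le) → α → α → Prop, IsRealizer le R :=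
  Nat.sInf_mem h

theorem orderDim_pos {le : α → α → Prop} {R : Fin t → α → α → Prop} (ht : 0 < t)
    (hR : IsRealizer le R) : 0 < orderDim le :=
  (orderDim_spec ⟨t, ht, R, hR⟩).1

theorem exists_isRealizer_orderDim {le : α → α → Prop} (h : 0 < orderDim le) :
    ∃ R : Fin (orderDim le) → α → α → Prop, IsRealizer le R :=
  (orderDim_spec (Nat.nonempty_of_pos_sInf h)).2

theorem orderDim_comap_le {le : β → β → Prop} {f : α → β} (hf : Injective f)
    (h : 0 < orderDim le) : orderDim (le on f) ≤ orderDim le := by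
  obtain ⟨R, hR⟩ := exists_isRealizer_orderDim h
  exact orderDim_le h (hR.comap hf)

theorem orderDim_pos_of_finite (α : Type*) [PartialOrder α] [Finite α] :
    0 < orderDim ((· ≤ ·) : α → α → Prop) := by
  let P := {p : α × α // ¬ p.1 ≤ p.2}
  choose L hL hle hL_not using fun p : P => exists_linearExtension_not_rel p.2
  let e := Finite.equivFin P
  have hR : IsRealizer (· ≤ ·) fun i => L (e.symm i) := by
    refine ⟨fun i => hL _, fun x y => ⟨fun h i => hle _ x y h, fun h => ?_⟩⟩
    by_contra hxy
    exact hL_not ⟨(x, y), hxy⟩ (by simpa using h (e ⟨(x, y), hxy⟩))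
  obtain ⟨Q, hQ, hleQ⟩ := extend_partialOrder ((· ≤ ·) : α → α → Prop)
  exact orderDim_pos (Nat.succ_pos _) (hR.snoc hQ hleQ)

end Realizer

section Adjunct

variable {α β : Type*}

/-- The chain `s` inserted into the chain `r` right after its initial segment `D`. -/
def insertRel (r : α → α → Prop) (s : β → β → Prop) (D : α → Prop) :
    α ⊕ β → α ⊕ β → Prop
  | .inl x, .inl y => r x y
  | .inl x, .inr _ => D x
  | .inr _, .inl y => ¬ D y
  | .inr x, .inr y => s x y

theorem isLinearOrder_insertRel {r : α → α → Prop} {s : β → β → Prop} {D : α → Prop}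
    (hr : IsLinearOrder α r) (hs : IsLinearOrder β s) (hD : ∀ x y, r x y → D y → D x) :
    IsLinearOrder (α ⊕ β) (insertRel r s D) where
  refl
    | .inl x => refl_of r x
    | .inr x => refl_of s x
  trans := by
    rintro (x | x) (y | y) (z | z) hxy hyz <;> simp only [insertRel] at hxy hyz ⊢
    · exact _root_.trans hxy hyz
    · exact hD x y hxy hyz
    · exact (total_of r x z).resolve_right fun hzx => hyz (hD z x hzx hxy)
    · exact hxy
    · exact fun hz => hxy (hD y z hyz hz)
    · exact absurd hyz hxy
    · exact hyz
    · exact _root_.trans hxy hyz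
  antisymm := by
    rintro (x | x) (y | y) hxy hyx <;> simp only [insertRel] at hxy hyx
    · exact congrArg Sum.inl (antisymm hxy hyx)
    · exact absurd hxy hyx
    · exact absurd hyx hxy
    · exact congrArg Sum.inr (antisymm hxy hyx)
  total
    | .inl x, .inl y => total_of r x y
    | .inl x, .inr _ => em (D x)
    | .inr _, .inl y => (em (D y)).symm
    | .inr x, .inr y => total_of s x y

theorem isRealizer_adjunctLE_insertRel [LE α] [LE β] {a b : α} {k : ℕ}
    {P : Fin k → α → α → Prop} {S : Fin k → β → β → Prop} {D : Fin k → α → Prop}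
    (hP : IsRealizer (· ≤ ·) P) (hS : IsRealizer (· ≤ ·) S)
    (hD : ∀ i x y, P i x y → D i y → D i x)
    (hDa : ∀ x, x ≤ a ↔ ∀ i, D i x) (hDb : ∀ x, b ≤ x ↔ ∀ i, ¬ D i x) :
    IsRealizer (adjunctLE a b) fun i => insertRel (P i) (S i) (D i) := by
  refine ⟨fun i => isLinearOrder_insertRel (hP.1 i) (hS.1 i) (hD i), ?_⟩
  rintro (x | x) (y | y)
  exacts [hP.2 x y, hDa x, hDb y, hS.2 x y]

theorem exists_isRealizer_adjunctLE [PartialOrder α] [LE β] {a b : α} (hab : a < b)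
    {m n : ℕ} (hmn : m < n) {R : Fin m → α → α → Prop} (hR : IsRealizer (· ≤ ·) R)
    {S : Fin n → β → β → Prop} (hS : IsRealizer (· ≤ ·) S) :
    ∃ T : Fin n → α ⊕ β → α ⊕ β → Prop, IsRealizer (adjunctLE a b) T := by
  obtain ⟨Q, hQ, hleQ, hQa⟩ := exists_linearExtension_isLowerSet (isLowerSet_Iic a)
  let D : Fin (m + 1) → α → Prop := Fin.snoc (fun i x => ¬ R i b x) (· ≤ a)
  have hD : ∀ i x y, (Fin.snoc R Q : Fin (m + 1) → α → α → Prop) i x y → D i y → D i x := by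
    refine Fin.lastCases (by simpa [D] using hQa) fun i x y hxy hy => ?_
    simp only [D, Fin.snoc_castSucc] at hxy hy ⊢
    exact fun hbx => hy (haveI := hR.1 i; _root_.trans hbx hxy)
  have hDa : ∀ x, x ≤ a ↔ ∀ i, D i x := by
    simp only [D, Fin.forall_fin_succ', Fin.snoc_castSucc, Fin.snoc_last]
    exact fun x => ⟨fun hxa => ⟨hR.not_rel_of_lt (hxa.trans_lt hab), hxa⟩, And.right⟩
  have hDb : ∀ x, b ≤ x ↔ ∀ i, ¬ D i x := by
    simp only [D, Fin.forall_fin_succ', Fin.snoc_castSucc, Fin.snoc_last, not_not]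
    exact fun x => ⟨fun hbx => ⟨(hR.2 b x).1 hbx, fun hxa => hab.not_ge (hbx.trans hxa)⟩,
      fun h => (hR.2 b x).2 h.1⟩
  have hf : Surjective (invFun (Fin.castLE hmn)) :=
    invFun_surjective (Fin.castLE_injective hmn)
  exact ⟨_, isRealizer_adjunctLE_insertRel ((hR.snoc hQ hleQ).comp_surjective hf) hS
    (fun _ => hD _) (fun x => (hDa x).trans hf.forall) (fun x => (hDb x).trans hf.forall)⟩

end Adjunct

theorem dim_adjunct_of_lt_general {α β : Type*} [Lattice α] [Lattice β]
    [Finite α] {a b : α} (hab : a < b)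
    {m n : ℕ} (hm : orderDim ((· ≤ ·) : α → α → Prop) = m)
    (hn : orderDim ((· ≤ ·) : β → β → Prop) = n) (hmn : m < n) :
    orderDim (adjunctLE (α := α) (β := β) a b) = n := by
  subst hm hn
  have hn₀ := pos_of_gt hmn
  obtain ⟨R, hR⟩ := exists_isRealizer_orderDim (orderDim_pos_of_finite α)
  obtain ⟨S, hS⟩ := exists_isRealizer_orderDim hn₀
  obtain ⟨T, hT⟩ := exists_isRealizer_adjunctLE hab hmn hR hS
  exact le_antisymm (orderDim_le hn₀ hT)
    (orderDim_comap_le Sum.inr_injective (orderDim_pos hn₀ hT))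

/-- if `m = Dim L₁ < n = Dim L₂` then `Dim(L₁ ]ᵇₐ L₂) = n`. -/
theorem dim_adjunct_of_lt {α β : Type*} [Lattice α] [Lattice β]
    [Finite α] [Finite β] {a b : α} (hab : a < b) (hcov : ¬ a ⋖ b)
    {m n : ℕ} (hm : orderDim ((· ≤ ·) : α → α → Prop) = m)
    (hn : orderDim ((· ≤ ·) : β → β → Prop) = n) (hmn : m < n) :
    orderDim (adjunctLE (α := α) (β := β) a b) = n :=
  dim_adjunct_of_lt_general hab hm hn hmn
end

section
/- For every integer r ≥ 2, the nullity of the complete fundamental basic block L_r equals the binomial coefficient C(r, 2) = r(r−1)/2. -/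
/-! The covering pairs of `L_r` are the `2r - 2` steps of the chain and, for every `c_{ij}`, the
two pairs `A_i ⋖ c_{ij} ⋖ A_j`; there are `2r - 1 + C(r, 2)` elements, and the cover graph is
connected (the chain is a path and every `c_{ij}` hangs off it). Hence the nullity is
`(2r - 2 + 2 C(r, 2)) - (2r - 1 + C(r, 2)) + 1 = C(r, 2)`. -/

lemma nullity_of_isEmpty (α : Type*) [PartialOrder α] [IsEmpty α] : nullity α = 0 := by
  simp [nullity]

lemma nullity_of_connected {α : Type*} [PartialOrder α] (h : (coverGraph α).Connected) :
    nullity α = (Nat.card {p : α × α // p.1 ⋖ p.2} : ℤ) - Nat.card α + 1 := by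
  have hcomp : Nat.card (coverGraph α).ConnectedComponent = 1 :=
    Nat.card_eq_one_iff_unique.2 ⟨h.preconnected.subsingleton_connectedComponent,
      h.nonempty.map (coverGraph α).connectedComponentMk⟩
  rw [nullity, hcomp, Nat.cast_one]

namespace Lr

variable {r : ℕ}

abbrev Pair (r : ℕ) := {p : Fin r × Fin r // (p.1 : ℕ) < (p.2 : ℕ)}

def chain (k : Fin (2 * r - 1)) : Lr r := Sum.inl k

def pair (c : Pair r) : Lr r := Sum.inr c

@[elab_as_elim]
lemma chain_pair_cases {motive : Lr r → Prop} (chain : ∀ k, motive (chain k))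
    (pair : ∀ c, motive (pair c)) (x : Lr r) : motive x := by
  rcases x with k | c
  exacts [chain k, pair c]

instance : IsEmpty (Lr 0) := ⟨chain_pair_cases (fun k => k.elim0) (fun c => c.1.1.elim0)⟩

lemma chain_injective : Function.Injective (chain (r := r)) := Sum.inl_injective

lemma pair_injective : Function.Injective (pair (r := r)) := Sum.inr_injective

lemma chain_ne_pair (k : Fin (2 * r - 1)) (c : Pair r) : chain k ≠ pair c := Sum.inl_ne_inr

lemma chain_le_chain {k k' : Fin (2 * r - 1)} : chain k ≤ chain k' ↔ (k : ℕ) ≤ k' := Iff.rfl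

lemma chain_le_pair {k : Fin (2 * r - 1)} {c : Pair r} :
    chain k ≤ pair c ↔ (k : ℕ) ≤ 2 * (c.1.1 : ℕ) := Iff.rfl

lemma pair_le_chain {c : Pair r} {k : Fin (2 * r - 1)} :
    pair c ≤ chain k ↔ 2 * (c.1.2 : ℕ) ≤ k := Iff.rfl

lemma pair_le_pair {c c' : Pair r} :
    pair c ≤ pair c' ↔
      ((c.1.1 : ℕ) = c'.1.1 ∧ (c.1.2 : ℕ) = c'.1.2) ∨ (c.1.2 : ℕ) ≤ c'.1.1 := Iff.rfl

@[simp] lemma chain_lt_chain {k k' : Fin (2 * r - 1)} : chain k < chain k' ↔ (k : ℕ) < k' := by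
  rw [lt_iff_le_not_ge, chain_le_chain, chain_le_chain]; omega

@[simp] lemma chain_lt_pair {k : Fin (2 * r - 1)} {c : Pair r} :
    chain k < pair c ↔ (k : ℕ) ≤ 2 * (c.1.1 : ℕ) := by
  rw [lt_iff_le_not_ge, chain_le_pair, pair_le_chain]; have := c.2; omega

@[simp] lemma pair_lt_chain {c : Pair r} {k : Fin (2 * r - 1)} :
    pair c < chain k ↔ 2 * (c.1.2 : ℕ) ≤ k := by
  rw [lt_iff_le_not_ge, chain_le_pair, pair_le_chain]; have := c.2; omega

@[simp] lemma pair_lt_pair {c c' : Pair r} : pair c < pair c' ↔ (c.1.2 : ℕ) ≤ c'.1.1 := by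
  rw [lt_iff_le_not_ge, pair_le_pair, pair_le_pair]; have := c.2; have := c'.2; omega

/- `c_{ij}` is parallel to `x_i` (the chain element at position `2i + 1`): whatever lies
strictly below or above `c_{ij}` lies strictly below or above `x_i`. -/
lemma lt_chain_of_lt_pair {x : Lr r} {c : Pair r} (h : x < pair c) :
    x < chain ⟨2 * c.1.1 + 1, by have := c.2; omega⟩ := by
  induction x using chain_pair_cases with
  | chain k => simp only [chain_lt_pair, chain_lt_chain] at h ⊢; omega
  | pair d => simp only [pair_lt_pair, pair_lt_chain] at h ⊢; omega

lemma chain_lt_of_pair_lt {y : Lr r} {c : Pair r} (h : pair c < y) :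
    chain ⟨2 * c.1.1 + 1, by have := c.2; omega⟩ < y := by
  have := c.2
  induction y using chain_pair_cases with
  | chain k => simp only [pair_lt_chain, chain_lt_chain] at h ⊢; omega
  | pair d => simp only [pair_lt_pair, chain_lt_pair] at h ⊢; omega

lemma covBy_iff_forall_chain {x y : Lr r} :
    x ⋖ y ↔ x < y ∧ ∀ k, x < chain k → ¬ chain k < y := by
  refine ⟨fun h => ⟨h.1, fun _ => @h.2 _⟩,
    fun ⟨hlt, hchain⟩ => ⟨hlt, fun z hxz hzy => ?_⟩⟩
  induction z using chain_pair_cases with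
  | chain k => exact hchain k hxz hzy
  | pair c => exact hchain _ (lt_chain_of_lt_pair hxz) (chain_lt_of_pair_lt hzy)

@[simp] lemma chain_covBy_chain {k k' : Fin (2 * r - 1)} :
    chain k ⋖ chain k' ↔ (k' : ℕ) = k + 1 := by
  simp only [covBy_iff_forall_chain, chain_lt_chain]
  refine ⟨fun ⟨hlt, hchain⟩ => ?_, fun h => ⟨by omega, fun m => by omega⟩⟩
  by_contra hne
  exact hchain ⟨k + 1, by omega⟩ (by dsimp only; omega) (by dsimp only; omega)

@[simp] lemma chain_covBy_pair {k : Fin (2 * r - 1)} {c : Pair r} :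
    chain k ⋖ pair c ↔ (k : ℕ) = 2 * c.1.1 := by
  simp only [covBy_iff_forall_chain, chain_lt_chain, chain_lt_pair]
  refine ⟨fun ⟨hlt, hchain⟩ => ?_, fun h => ⟨by omega, fun m => by omega⟩⟩
  by_contra hne
  exact hchain ⟨2 * c.1.1, by omega⟩ (by dsimp only; omega) (by dsimp only; omega)

@[simp] lemma pair_covBy_chain {c : Pair r} {k : Fin (2 * r - 1)} :
    pair c ⋖ chain k ↔ (k : ℕ) = 2 * c.1.2 := by
  simp only [covBy_iff_forall_chain, chain_lt_chain, pair_lt_chain]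
  refine ⟨fun ⟨hlt, hchain⟩ => ?_, fun h => ⟨by omega, fun m => by omega⟩⟩
  by_contra hne
  exact hchain ⟨2 * c.1.2, by omega⟩ (by dsimp only; omega) (by dsimp only; omega)

@[simp] lemma not_pair_covBy_pair {c c' : Pair r} : ¬ pair c ⋖ pair c' := by
  simp only [covBy_iff_forall_chain, pair_lt_pair, pair_lt_chain, chain_lt_pair, not_and]
  intro hlt hchain
  exact hchain ⟨2 * c.1.2, by have := c'.2; omega⟩ le_rfl (by simpa using hlt)

def coveringPair : Fin (2 * r - 2) ⊕ (Pair r ⊕ Pair r) → Lr r × Lr r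
  | .inl k => (chain ⟨k, by omega⟩, chain ⟨k + 1, by omega⟩)
  | .inr (.inl c) => (chain ⟨2 * c.1.1, by have := c.2; omega⟩, pair c)
  | .inr (.inr c) => (pair c, chain ⟨2 * c.1.2, by omega⟩)

lemma coveringPair_injective : Function.Injective (coveringPair (r := r)) := by
  rintro (k | c | c) (k' | c' | c') h <;>
    simp_all [coveringPair, chain_injective.eq_iff, pair_injective.eq_iff, chain_ne_pair,
      (chain_ne_pair _ _).symm, Fin.ext_iff]

lemma range_coveringPair : Set.range (coveringPair (r := r)) = {p | p.1 ⋖ p.2} := by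
  ext ⟨x, y⟩
  simp only [Set.mem_range, Set.mem_ofPred_eq]
  refine ⟨?_, fun h => ?_⟩
  · rintro ⟨k | c | c, hk⟩ <;> cases hk <;> simp
  · induction x using chain_pair_cases with
    | chain k =>
      induction y using chain_pair_cases with
      | chain k' =>
        rw [chain_covBy_chain] at h
        exact ⟨.inl ⟨k, by omega⟩,
          by simp [coveringPair, chain_injective.eq_iff, Fin.ext_iff, h]⟩
      | pair c =>
        rw [chain_covBy_pair] at h
        exact ⟨.inr (.inl c), by simp [coveringPair, chain_injective.eq_iff, Fin.ext_iff, h]⟩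
    | pair c =>
      induction y using chain_pair_cases with
      | chain k =>
        rw [pair_covBy_chain] at h
        exact ⟨.inr (.inr c), by simp [coveringPair, chain_injective.eq_iff, Fin.ext_iff, h]⟩
      | pair c' => exact absurd h not_pair_covBy_pair

lemma card_pair : Nat.card (Pair r) = r.choose 2 := by
  rw [Nat.card_eq_fintype_card, Fintype.card_subtype]
  simpa using Fintype.card_product_filter_lt (α := Fin r)

lemma card_covBy : Nat.card {p : Lr r × Lr r // p.1 ⋖ p.2} = 2 * r - 2 + 2 * r.choose 2 := by
  rw [← Set.coe_ofPred, ← range_coveringPair,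
    Nat.card_range_of_injective coveringPair_injective, Nat.card_sum, Nat.card_sum, card_pair,
    Nat.card_fin, two_mul (r.choose 2)]

lemma card_eq : Nat.card (Lr r) = 2 * r - 1 + r.choose 2 := by
  rw [← card_pair, ← Nat.card_fin (2 * r - 1), ← Nat.card_sum]
  rfl

lemma coverGraph_connected (hr : 0 < r) : (coverGraph (Lr r)).Connected := by
  have h0 : 0 < 2 * r - 1 := by omega
  have hchain : ∀ m (hm : m < 2 * r - 1),
      (coverGraph (Lr r)).Reachable (chain ⟨0, h0⟩) (chain ⟨m, hm⟩) := by
    intro m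
    induction m with
    | zero => exact fun _ => .rfl
    | succ m ih =>
      exact fun hm => (ih (by omega)).trans (SimpleGraph.Adj.reachable (Or.inl (by simp)))
  refine (SimpleGraph.connected_iff_exists_forall_reachable _).2
    ⟨chain ⟨0, h0⟩, fun x => ?_⟩
  induction x using chain_pair_cases with
  | chain k => exact hchain k k.2
  | pair c =>
    have hc : 2 * (c.1.1 : ℕ) < 2 * r - 1 := by have := c.2; omega
    exact (hchain _ hc).trans (SimpleGraph.Adj.reachable (Or.inl (chain_covBy_pair.2 rfl)))

end Lr

theorem nullity_Lr_general (r : ℕ) :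
    nullity (Lr r) = (r.choose 2 : ℤ) ∧ r.choose 2 = r * (r - 1) / 2 := by
  refine ⟨?_, Nat.choose_two_right r⟩
  rcases Nat.eq_zero_or_pos r with rfl | hr
  · exact nullity_of_isEmpty _
  · rw [nullity_of_connected (Lr.coverGraph_connected hr), Lr.card_covBy, Lr.card_eq]
    push_cast
    omega

/-- for `r ≥ 2`, the nullity of the complete fundamental basic
block `L_r` equals `C(r, 2) = r (r - 1) / 2`. -/
theorem nullity_Lr (r : ℕ) (hr : 2 ≤ r) :
    nullity (Lr r) = (r.choose 2 : ℤ) ∧ r.choose 2 = r * (r - 1) / 2 :=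
  nullity_Lr_general r
end

section
/- For every integer r ≥ 2, the reducible elements of the complete fundamental basic block L_r are exactly A₁, …, A_r: each A_i has at least two lower covers or at least two upper covers, while every element x_i and every element c_{ij} has exactly one lower cover and exactly one upper cover. In particular, L_r is an RC-lattice with |Red(L_r)| = r. -/
/-!
An element `z` whose strict down-set is a principal ideal `Iic a` has `a` as its only lower cover,
and dually for strict up-sets. In `L_r` the elements strictly below `x_i` are those below `A_i` and
the ones strictly above it are those above `A_{i+1}`; likewise for `c_{ij}` with `A_i` and `A_j`.
Hence all of these are doubly irreducible, whereas `A_i` (`i < r`) is covered by both `x_i` and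
`c_{i,i+1}`, and `A_r` covers both `x_{r-1}` and `c_{1r}`.
-/

section CovBy

variable {α : Type*} [PartialOrder α] {a z w : α}

theorem covBy_iff_eq_of_Iio_eq_Iic (h : Set.Iio z = Set.Iic a) : w ⋖ z ↔ w = a := by
  have hlt (b : α) : b < z ↔ b ≤ a := Set.ext_iff.1 h b
  have ha : a < z := (hlt a).2 le_rfl
  constructor
  · intro hw
    exact ((hlt w).1 hw.lt).eq_or_lt.resolve_right fun hwa => hw.2 hwa ha
  · rintro rfl
    exact ⟨ha, fun b hwb hbz => ((hlt b).1 hbz).not_gt hwb⟩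

theorem covBy_iff_eq_of_Ioi_eq_Ici (h : Set.Ioi z = Set.Ici a) : z ⋖ w ↔ w = a := by
  rw [← toDual_covBy_toDual_iff]
  exact covBy_iff_eq_of_Iio_eq_Iic (α := αᵒᵈ) h

theorem existsUnique_covBy_of_Iio_eq_Iic (h : Set.Iio z = Set.Iic a) : ∃! w, w ⋖ z :=
  ⟨a, (covBy_iff_eq_of_Iio_eq_Iic h).2 rfl, fun _ => (covBy_iff_eq_of_Iio_eq_Iic h).1⟩

theorem existsUnique_covBy_of_Ioi_eq_Ici (h : Set.Ioi z = Set.Ici a) : ∃! w, z ⋖ w :=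
  ⟨a, (covBy_iff_eq_of_Ioi_eq_Ici h).2 rfl, fun _ => (covBy_iff_eq_of_Ioi_eq_Ici h).1⟩

theorem doublyIrreducible_of_Iio_eq_Iic_of_Ioi_eq_Ici {b : α} (hl : Set.Iio z = Set.Iic a)
    (hu : Set.Ioi z = Set.Ici b) : DoublyIrreducible z :=
  ⟨fun _ h₁ _ h₂ => (existsUnique_covBy_of_Iio_eq_Iic hl).unique h₁ h₂,
    fun _ h₁ _ h₂ => (existsUnique_covBy_of_Ioi_eq_Ici hu).unique h₁ h₂⟩

theorem reducible_iff_nontrivial :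
    Reducible z ↔ {w | w ⋖ z}.Nontrivial ∨ {w | z ⋖ w}.Nontrivial := by
  rw [Reducible, DoublyIrreducible, not_and_or, Set.not_subsingleton_iff, Set.not_subsingleton_iff]

end CovBy

theorem two_le_natCard_of_nontrivial {α : Type*} [Finite α] {s : Set α} (hs : s.Nontrivial) :
    2 ≤ Nat.card s :=
  have := hs.coe_sort
  Finite.one_lt_card

namespace Lr

variable {r : ℕ}

instance : Finite (Lr r) := by unfold Lr; infer_instance

theorem le_def {x y : Lr r} : x ≤ y ↔ Lr.le x y := Iff.rfl

theorem lt_def {x y : Lr r} : x < y ↔ Lr.le x y ∧ ¬ Lr.le y x := lt_iff_le_not_ge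

theorem A_le_A {i j : Fin r} : A i ≤ A j ↔ i ≤ j := by
  change 2 * (i : ℕ) ≤ 2 * j ↔ i ≤ j
  omega

theorem A_injective : Function.Injective (A (r := r)) :=
  fun _ _ h => le_antisymm (A_le_A.1 h.le) (A_le_A.1 h.ge)

theorem eq_A_or_eq_X_or_eq_c (z : Lr r) :
    (∃ i, z = A i) ∨ (∃ i, z = X i) ∨ ∃ i j h, z = c i j h := by
  rcases z with k | ⟨⟨i, j⟩, h⟩
  · have hk := k.isLt
    obtain ⟨m, hm | hm⟩ := Nat.even_or_odd' k
    · exact Or.inl ⟨⟨m, by omega⟩, congrArg Sum.inl (Fin.ext hm)⟩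
    · exact Or.inr (Or.inl ⟨⟨m, by omega⟩, congrArg Sum.inl (Fin.ext hm)⟩)
  · exact Or.inr (Or.inr ⟨i, j, h, rfl⟩)

theorem Iio_X (i : Fin (r - 1)) : Set.Iio (X i) = Set.Iic (A ⟨i, by omega⟩) := by
  ext w
  simp only [Set.mem_Iio, Set.mem_Iic, lt_def, le_def]
  rcases w with k | ⟨p, hp⟩ <;> simp [le, A, X] <;> omega

theorem Ioi_X (i : Fin (r - 1)) : Set.Ioi (X i) = Set.Ici (A ⟨i + 1, by omega⟩) := by
  ext w
  simp only [Set.mem_Ioi, Set.mem_Ici, lt_def, le_def]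
  rcases w with k | ⟨p, hp⟩ <;> simp [le, A, X] <;> omega

theorem Iio_c (i j : Fin r) (h : (i : ℕ) < j) : Set.Iio (c i j h) = Set.Iic (A i) := by
  ext w
  simp only [Set.mem_Iio, Set.mem_Iic, lt_def, le_def]
  rcases w with k | ⟨p, hp⟩ <;> simp [le, A, c] <;> omega

theorem Ioi_c (i j : Fin r) (h : (i : ℕ) < j) : Set.Ioi (c i j h) = Set.Ici (A j) := by
  ext w
  simp only [Set.mem_Ioi, Set.mem_Ici, lt_def, le_def]
  rcases w with k | ⟨p, hp⟩ <;> simp [le, A, c] <;> omega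

theorem doublyIrreducible_X (i : Fin (r - 1)) : DoublyIrreducible (X i) :=
  doublyIrreducible_of_Iio_eq_Iic_of_Ioi_eq_Ici (Iio_X i) (Ioi_X i)

theorem doublyIrreducible_c (i j : Fin r) (h : (i : ℕ) < j) : DoublyIrreducible (c i j h) :=
  doublyIrreducible_of_Iio_eq_Iic_of_Ioi_eq_Ici (Iio_c i j h) (Ioi_c i j h)

theorem nontrivial_covBy_A (hr : 2 ≤ r) (i : Fin r) :
    {w | w ⋖ A i}.Nontrivial ∨ {w | A i ⋖ w}.Nontrivial := by
  by_cases hi : (i : ℕ) + 1 < r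
  · right
    refine ⟨X ⟨i, by omega⟩, ?_, c i ⟨i + 1, hi⟩ (Nat.lt_succ_self _), ?_,
      Sum.inl_ne_inr⟩
    · exact (covBy_iff_eq_of_Iio_eq_Iic (Iio_X _)).2 rfl
    · exact (covBy_iff_eq_of_Iio_eq_Iic (Iio_c _ _ _)).2 rfl
  · left
    refine ⟨X ⟨i - 1, by omega⟩, ?_, c ⟨0, by omega⟩ i (by simp only; omega), ?_,
      Sum.inl_ne_inr⟩
    · exact (covBy_iff_eq_of_Ioi_eq_Ici (Ioi_X _)).2 (congrArg A (Fin.ext (by simp only; omega)))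
    · exact (covBy_iff_eq_of_Ioi_eq_Ici (Ioi_c _ _ _)).2 rfl

theorem reducible_iff (hr : 2 ≤ r) (z : Lr r) : Reducible z ↔ ∃ i, z = A i := by
  refine ⟨fun hz => ?_, ?_⟩
  · rcases eq_A_or_eq_X_or_eq_c z with hA | ⟨i, rfl⟩ | ⟨i, j, h, rfl⟩
    · exact hA
    · exact absurd (doublyIrreducible_X i) hz
    · exact absurd (doublyIrreducible_c i j h) hz
  · rintro ⟨i, rfl⟩
    exact reducible_iff_nontrivial.2 (nontrivial_covBy_A hr i)

theorem setOf_reducible (hr : 2 ≤ r) : {z : Lr r | Reducible z} = Set.range A :=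
  Set.ext fun z => (reducible_iff hr z).trans (by simp [eq_comm])

end Lr

/-- for `r ≥ 2`, the reducible elements of `L_r` are exactly
`A₁, …, A_r`: each `A_i` has at least two lower covers or at least two upper
covers, while each `x_i` and each `c_{ij}` has exactly one lower cover and
exactly one upper cover; in particular `L_r` is an RC-lattice (any two
reducible elements are comparable) with exactly `r` reducible elements. -/
theorem reducibles_of_Lr (r : ℕ) (hr : 2 ≤ r) :
    (∀ z : Lr r, Reducible z ↔ ∃ i : Fin r, z = Lr.A i) ∧
    (∀ i : Fin r,
      2 ≤ Nat.card {w : Lr r // w ⋖ Lr.A i} ∨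
        2 ≤ Nat.card {w : Lr r // Lr.A i ⋖ w}) ∧
    (∀ i : Fin (r - 1),
      (∃! w : Lr r, w ⋖ Lr.X i) ∧ (∃! w : Lr r, Lr.X i ⋖ w)) ∧
    (∀ (i j : Fin r) (h : (i : ℕ) < (j : ℕ)),
      (∃! w : Lr r, w ⋖ Lr.c i j h) ∧ (∃! w : Lr r, Lr.c i j h ⋖ w)) ∧
    (∀ x y : Lr r, Reducible x → Reducible y → x ≤ y ∨ y ≤ x) ∧
    Nat.card {z : Lr r // Reducible z} = r := by
  refine ⟨Lr.reducible_iff hr, fun i => ?_, fun i => ?_, fun i j h => ?_, fun x y hx hy => ?_,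
    ?_⟩
  · exact (Lr.nontrivial_covBy_A hr i).imp two_le_natCard_of_nontrivial
      two_le_natCard_of_nontrivial
  · exact ⟨existsUnique_covBy_of_Iio_eq_Iic (Lr.Iio_X i),
      existsUnique_covBy_of_Ioi_eq_Ici (Lr.Ioi_X i)⟩
  · exact ⟨existsUnique_covBy_of_Iio_eq_Iic (Lr.Iio_c i j h),
      existsUnique_covBy_of_Ioi_eq_Ici (Lr.Ioi_c i j h)⟩
  · obtain ⟨i, rfl⟩ := (Lr.reducible_iff hr x).1 hx
    obtain ⟨j, rfl⟩ := (Lr.reducible_iff hr y).1 hy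
    exact (le_total i j).imp Lr.A_le_A.2 Lr.A_le_A.2
  · change Nat.card {z : Lr r | Reducible z} = r
    rw [Lr.setOf_reducible hr, Nat.card_range_of_injective Lr.A_injective, Nat.card_fin]
end
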